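/- Let μ be a probability measure on {0,1}×{0,1}×{0,1} with coordinate random variables X, Y, Z, and suppose μ has full support, i.e. μ(X=i, Y=j, Z=k) > 0 for all i,j,k ∈ {0,1}. If X⊥Y, X⊥Y|Z, X⊥Z|Y and Y⊥Z|X all hold, then X, Y, Z are mutually independent; in particular X⊥Z and Y⊥Z also hold. -/

import Mathlib

open MeasureTheory

/-- The sample space `{0,1} × {0,1} × {0,1}`. -/
abbrev Omega3 : Type := Fin 2 × Fin 2 × Fin 2

noncomputable section

/-- marginal `μ(X = i)` -/
def pX (μ : Measure Omega3) (i : Fin 2) : ENNReal := μ {ω | ω.1 = i}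
/-- marginal `μ(Y = j)` -/
def pY (μ : Measure Omega3) (j : Fin 2) : ENNReal := μ {ω | ω.2.1 = j}
/-- marginal `μ(Z = k)` -/
def pZ (μ : Measure Omega3) (k : Fin 2) : ENNReal := μ {ω | ω.2.2 = k}
/-- `μ(X = i, Y = j)` -/
def pXY (μ : Measure Omega3) (i j : Fin 2) : ENNReal := μ {ω | ω.1 = i ∧ ω.2.1 = j}
/-- `μ(X = i, Z = k)` -/
def pXZ (μ : Measure Omega3) (i k : Fin 2) : ENNReal := μ {ω | ω.1 = i ∧ ω.2.2 = k}
/-- `μ(Y = j, Z = k)` -/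
def pYZ (μ : Measure Omega3) (j k : Fin 2) : ENNReal := μ {ω | ω.2.1 = j ∧ ω.2.2 = k}
/-- `μ(X = i, Y = j, Z = k)` -/
def pXYZ (μ : Measure Omega3) (i j k : Fin 2) : ENNReal :=
  μ {ω | ω.1 = i ∧ ω.2.1 = j ∧ ω.2.2 = k}

/-- `X ⊥ Y` -/
def IndXY (μ : Measure Omega3) : Prop := ∀ i j, pXY μ i j = pX μ i * pY μ j
/-- `X ⊥ Z` -/
def IndXZ (μ : Measure Omega3) : Prop := ∀ i k, pXZ μ i k = pX μ i * pZ μ k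
/-- `Y ⊥ Z` -/
def IndYZ (μ : Measure Omega3) : Prop := ∀ j k, pYZ μ j k = pY μ j * pZ μ k
/-- `X ⊥ Y | Z` -/
def CondXY_Z (μ : Measure Omega3) : Prop :=
  ∀ i j k, pXYZ μ i j k * pZ μ k = pXZ μ i k * pYZ μ j k
/-- `X ⊥ Z | Y` -/
def CondXZ_Y (μ : Measure Omega3) : Prop :=
  ∀ i j k, pXYZ μ i j k * pY μ j = pXY μ i j * pYZ μ j k
/-- `Y ⊥ Z | X` -/
def CondYZ_X (μ : Measure Omega3) : Prop :=
  ∀ i j k, pXYZ μ i j k * pX μ i = pXY μ i j * pXZ μ i k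
/-- `X ⊥ Y ⊥ Z` (mutual independence) -/
def MutualIndep (μ : Measure Omega3) : Prop :=
  ∀ i j k, pXYZ μ i j k = pX μ i * pY μ j * pZ μ k
/-- `X ⊥ (Y, Z)` (joint independence of `X` from the pair) -/
def JointX_YZ (μ : Measure Omega3) : Prop :=
  ∀ i j k, pXYZ μ i j k = pX μ i * pYZ μ j k
/-- `Y ⊥ (X, Z)` -/
def JointY_XZ (μ : Measure Omega3) : Prop :=
  ∀ i j k, pXYZ μ i j k = pY μ j * pXZ μ i k
/-- `Z ⊥ (X, Y)` -/
def JointZ_XY (μ : Measure Omega3) : Prop :=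
  ∀ i j k, pXYZ μ i j k = pZ μ k * pXY μ i j
/-- `μ` has full support on the eight atoms. -/
def FullSupport (μ : Measure Omega3) : Prop := ∀ i j k, 0 < pXYZ μ i j k


/-!
Under `X ⊥ Y`, the hypothesis `X ⊥ Z | Y` upgrades to `X ⊥ (Y, Z)` (the contraction axiom),
which marginalises to `X ⊥ Z`. Substituting `X ⊥ (Y, Z)`, `X ⊥ Y` and `X ⊥ Z` into
`Y ⊥ Z | X` gives `μ(X = i)² μ(Y = j, Z = k) = μ(X = i)² μ(Y = j) μ(Z = k)`, and cancelling
the positive `μ(X = i)` yields `Y ⊥ Z`; together with `X ⊥ (Y, Z)` this is mutual independence.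
-/

section

lemma measure_eq_add_by_Y_value (μ : Measure Omega3) (s : Set Omega3) :
    μ s = μ {ω | ω ∈ s ∧ ω.2.1 = 0} + μ {ω | ω ∈ s ∧ ω.2.1 = 1} := by
  rw [← measure_union _ (Set.toFinite _).measurableSet]
  · congr 1
    ext ω
    have : ω.2.1 = 0 ∨ ω.2.1 = 1 := by omega
    simp only [Set.mem_ofPred_eq, Set.mem_union]
    tauto
  · exact Set.disjoint_left.2 fun ω h0 h1 => absurd (h0.2.symm.trans h1.2) (by decide)

lemma pXZ_eq_add (μ : Measure Omega3) (i k : Fin 2) :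
    pXZ μ i k = pXYZ μ i 0 k + pXYZ μ i 1 k := by
  rw [pXZ, measure_eq_add_by_Y_value]
  congr 2 <;> ext ω <;> simp only [Set.mem_ofPred_eq] <;> tauto

lemma pZ_eq_add (μ : Measure Omega3) (k : Fin 2) :
    pZ μ k = pYZ μ 0 k + pYZ μ 1 k := by
  rw [pZ, measure_eq_add_by_Y_value]
  congr 2 <;> ext ω <;> simp only [Set.mem_ofPred_eq] <;> tauto

lemma pXYZ_le_pX (μ : Measure Omega3) (i j k : Fin 2) : pXYZ μ i j k ≤ pX μ i :=
  measure_mono fun _ h => h.1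

lemma pXYZ_le_pY (μ : Measure Omega3) (i j k : Fin 2) : pXYZ μ i j k ≤ pY μ j :=
  measure_mono fun _ h => h.2.1

variable {μ : Measure Omega3}

lemma FullSupport.pX_ne_zero (h : FullSupport μ) (i : Fin 2) : pX μ i ≠ 0 :=
  ((h i 0 0).trans_le (pXYZ_le_pX μ i 0 0)).ne'

lemma FullSupport.pY_ne_zero (h : FullSupport μ) (j : Fin 2) : pY μ j ≠ 0 :=
  ((h 0 j 0).trans_le (pXYZ_le_pY μ 0 j 0)).ne'

lemma jointX_YZ_of_indXY_of_condXZ_Y [IsFiniteMeasure μ] (hY : ∀ j, pY μ j ≠ 0)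
    (hXY : IndXY μ) (hXZ_Y : CondXZ_Y μ) : JointX_YZ μ := by
  intro i j k
  refine (ENNReal.mul_left_inj (hY j) (measure_ne_top μ _)).1 ?_
  rw [hXZ_Y i j k, hXY i j]
  ring

lemma JointX_YZ.indXZ (h : JointX_YZ μ) : IndXZ μ := by
  intro i k
  rw [pXZ_eq_add, h i 0 k, h i 1 k, pZ_eq_add, mul_add]

lemma JointX_YZ.indYZ [IsFiniteMeasure μ] (h : JointX_YZ μ) (hXY : IndXY μ)
    (hYZ_X : CondYZ_X μ) {i : Fin 2} (hX : pX μ i ≠ 0) : IndYZ μ := by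
  intro j k
  have hfin : pX μ i ≠ ⊤ := measure_ne_top μ _
  have key : pX μ i * pYZ μ j k * pX μ i = pX μ i * (pY μ j * pZ μ k) * pX μ i := by
    rw [← h, hYZ_X, hXY, h.indXZ]
    ring
  exact (ENNReal.mul_right_inj hX hfin).1 ((ENNReal.mul_left_inj hX hfin).1 key)

lemma JointX_YZ.mutualIndep (h : JointX_YZ μ) (hYZ : IndYZ μ) : MutualIndep μ := by
  intro i j k
  rw [h, hYZ, mul_assoc]

end

theorem stmt_10_general (μ : Measure Omega3) [IsProbabilityMeasure μ]
    (hfs : FullSupport μ)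
    (h1 : IndXY μ) (h3 : CondXZ_Y μ) (h4 : CondYZ_X μ) :
    MutualIndep μ ∧ IndXZ μ ∧ IndYZ μ := by
  have hJ : JointX_YZ μ := jointX_YZ_of_indXY_of_condXZ_Y hfs.pY_ne_zero h1 h3
  have hYZ : IndYZ μ := hJ.indYZ h1 h4 (hfs.pX_ne_zero 0)
  exact ⟨hJ.mutualIndep hYZ, hJ.indXZ, hYZ⟩

theorem stmt_10 (μ : Measure Omega3) [IsProbabilityMeasure μ]
    (hfs : FullSupport μ)
    (h1 : IndXY μ) (h2 : CondXY_Z μ) (h3 : CondXZ_Y μ) (h4 : CondYZ_X μ) :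
    MutualIndep μ ∧ IndXZ μ ∧ IndYZ μ :=
  stmt_10_general μ hfs h1 h3 h4
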